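/- For every even integer b ≥ 4, the tree R_b' has bandwidth exactly b, and its local density is also b, so B(R_b') = β(R_b') = b. -/

import Mathlib

/-- The bandwidth of an integer labeling `f` of the vertices of `G`:
the maximum of `|f u - f v|` over edges `uv` of `G`. -/
noncomputable def bwOf {V : Type*} (G : SimpleGraph V) (f : V → ℤ) : ℕ :=
  sSup {n | ∃ u v, G.Adj u v ∧ n = (f u - f v).natAbs}

/-- The bandwidth of a graph: the minimum of `bwOf G f` over injections `f : V → ℤ`. -/
noncomputable def bandwidth {V : Type*} (G : SimpleGraph V) : ℕ :=
  sInf {n | ∃ f : V → ℤ, Function.Injective f ∧ n = bwOf G f}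

/-- The local density of a graph: the maximum of `⌈(n(H) - 1)/diam H⌉` over connected
subgraphs `H` of `G` with at least two vertices. -/
noncomputable def localDensity {V : Type*} (G : SimpleGraph V) : ℕ :=
  sSup {d | ∃ H : G.Subgraph, H.coe.Connected ∧ 2 ≤ H.verts.ncard ∧
    d = (H.verts.ncard - 1) ⌈/⌉ H.coe.diam}

/-- Underlying asymmetric relation for `R'graph b`.
Spine vertices (`Fin 4`): `0 = x`, `1 = y`, `2 = z`, `3 = w`, with `w` adjacent to
`x, y, z`.  Tagged vertices `(t, _) : Fin 2 × Fin (b/2)`: `t = 0` is the leaf set `X`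
attached to `x` and `t = 1` the leaf set `Z` attached to `z`.  `Fin b` is the leaf set
`Y` attached to `y`, and `Fin (2b - 3)` is the leaf set `W` attached to `w`. -/
def R'Rel (b : ℕ) : Fin 4 ⊕ ((Fin 2 × Fin (b / 2)) ⊕ (Fin b ⊕ Fin (2 * b - 3))) →
    Fin 4 ⊕ ((Fin 2 × Fin (b / 2)) ⊕ (Fin b ⊕ Fin (2 * b - 3))) → Prop
  | Sum.inl i, Sum.inl j => i = 3 ∧ j ≠ 3
  | Sum.inl i, Sum.inr (Sum.inl (t, _)) => (t = 0 ∧ i = 0) ∨ (t = 1 ∧ i = 2)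
  | Sum.inl i, Sum.inr (Sum.inr (Sum.inl _)) => i = 1
  | Sum.inl i, Sum.inr (Sum.inr (Sum.inr _)) => i = 3
  | _, _ => False

/-- The near-caterpillar tree `R_b'` on `4b + 1` vertices. -/
def R'graph (b : ℕ) : SimpleGraph (Fin 4 ⊕ ((Fin 2 × Fin (b / 2)) ⊕ (Fin b ⊕ Fin (2 * b - 3)))) :=
  SimpleGraph.fromRel (R'Rel b)

section Aux
open SimpleGraph
variable {V : Type*} [Finite V] {G : SimpleGraph V} {f : V → ℤ}

lemma bwOf_bddAbove (G : SimpleGraph V) (f : V → ℤ) :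
    BddAbove {n | ∃ u v, G.Adj u v ∧ n = (f u - f v).natAbs} := by
  apply Set.Finite.bddAbove
  apply Set.Finite.subset (Set.finite_range fun p : V × V => (f p.1 - f p.2).natAbs)
  rintro n ⟨u, v, _, rfl⟩
  exact ⟨(u, v), rfl⟩

lemma edge_le_bwOf {u v : V} (h : G.Adj u v) : (f u - f v).natAbs ≤ bwOf G f :=
  le_csSup (bwOf_bddAbove G f) ⟨u, v, h, rfl⟩

lemma walk_le_bwOf (H : G.Subgraph) {u v : H.verts} (p : H.coe.Walk u v) :
    (f u.1 - f v.1).natAbs ≤ p.length * bwOf G f := by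
  induction p with
  | nil => simp
  | @cons a m c h p ih =>
    have hG : G.Adj a.1 m.1 := (H.coe_adj a m).mp h |>.adj_sub
    calc (f a.1 - f c.1).natAbs
        ≤ (f a.1 - f m.1).natAbs + (f m.1 - f c.1).natAbs := by
          have := Int.natAbs_add_le (f a.1 - f m.1) (f m.1 - f c.1)
          simpa using this
      _ ≤ bwOf G f + p.length * bwOf G f := Nat.add_le_add (edge_le_bwOf hG) ih
      _ = (Walk.cons h p).length * bwOf G f := by rw [Walk.length_cons]; ring

lemma two_le_enat {x : ℕ∞} (h0 : x ≠ 0) (h1 : x ≠ 1) : 2 ≤ x := by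
  cases x using ENat.recTopCoe with
  | top => exact le_top
  | coe n =>
    have h0' : n ≠ 0 := by exact_mod_cast h0
    have h1' : n ≠ 1 := by exact_mod_cast h1
    exact_mod_cast (by omega : 2 ≤ n)

lemma key_le (H : G.Subgraph) (hc : H.coe.Connected) (h2 : 2 ≤ H.verts.ncard)
    {f : V → ℤ} (hf : Function.Injective f) :
    (H.verts.ncard - 1) ⌈/⌉ H.coe.diam ≤ bwOf G f := by
  classical
  have hfin : H.verts.Finite := Set.toFinite _
  have hne : H.verts.Nonempty := by
    rw [← Set.ncard_pos hfin]; omega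
  obtain ⟨u, hu, hmax⟩ := Set.exists_max_image H.verts f hfin hne
  obtain ⟨v, hv, hmin⟩ := Set.exists_min_image H.verts f hfin hne
  have hspread : (H.verts.ncard : ℤ) ≤ f u - f v + 1 := by
    have hcard : (hfin.toFinset.image f).card = H.verts.ncard := by
      rw [Finset.card_image_of_injective _ hf, Set.ncard_eq_toFinset_card _ hfin]
    have hsub : hfin.toFinset.image f ⊆ Finset.Icc (f v) (f u) := by
      intro n hn
      simp only [Finset.mem_image, Set.Finite.mem_toFinset] at hn
      obtain ⟨a, ha, rfl⟩ := hn
      exact Finset.mem_Icc.mpr ⟨hmin a ha, hmax a ha⟩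
    have := Finset.card_le_card hsub
    rw [hcard, Int.card_Icc] at this
    omega
  have hnty : Nonempty H.verts := hne.to_subtype
  have hed : H.coe.ediam ≠ ⊤ := by
    obtain ⟨a, c, hac⟩ := SimpleGraph.exists_edist_eq_ediam_of_finite (G := H.coe)
    rw [← hac]
    exact SimpleGraph.edist_ne_top_iff_reachable.mpr (hc.preconnected a c)
  obtain ⟨p, hp⟩ := (hc.preconnected ⟨u, hu⟩ ⟨v, hv⟩).exists_walk_length_eq_dist
  have h1 : (f u - f v).natAbs ≤ p.length * bwOf G f := walk_le_bwOf H p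
  have h2' : p.length ≤ H.coe.diam := by
    rw [hp]; exact SimpleGraph.dist_le_diam hed
  have hchain : H.verts.ncard - 1 ≤ H.coe.diam * bwOf G f := by
    calc H.verts.ncard - 1 ≤ (f u - f v).natAbs := by omega
      _ ≤ p.length * bwOf G f := h1
      _ ≤ H.coe.diam * bwOf G f := Nat.mul_le_mul_right _ h2'
  have hd : 0 < H.coe.diam := by
    rcases Nat.eq_zero_or_pos H.coe.diam with h0 | h
    · exfalso
      rcases SimpleGraph.diam_eq_zero.mp h0 with ht | hs
      · exact hed ht
      · obtain ⟨a, c, ha, hc', hne'⟩ := (Set.one_lt_ncard_iff hfin).mp (by omega)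
        exact hne' (congrArg Subtype.val (hs.elim (⟨a, ha⟩ : H.verts) ⟨c, hc'⟩))
    · exact h
  exact (ceilDiv_le_iff_le_mul hd).mpr hchain

end Aux

/-- The explicit optimal labeling of `R'graph b`. -/
def fLab (b : ℕ) : Fin 4 ⊕ ((Fin 2 × Fin (b / 2)) ⊕ (Fin b ⊕ Fin (2 * b - 3))) → ℤ
  | .inl i => if (i : ℕ) = 0 then ((b / 2 : ℕ) : ℤ)
      else if (i : ℕ) = 1 then -(b : ℤ) else if (i : ℕ) = 2 then (b : ℤ) else 0
  | .inr (.inl (t, i)) => if (t : ℕ) = 0 then (b : ℤ) + 1 + (i : ℕ)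
      else (b : ℤ) + ((b / 2 : ℕ) : ℤ) + 1 + (i : ℕ)
  | .inr (.inr (.inl i)) => -2 * (b : ℤ) + (i : ℕ)
  | .inr (.inr (.inr i)) =>
      if (i : ℕ) < b - 1 then -(b : ℤ) + 1 + (i : ℕ)
      else if (i : ℕ) < b + b / 2 - 2 then ((i : ℕ) : ℤ) - b + 2
      else ((i : ℕ) : ℤ) - b + 3

lemma fLab_inj (b : ℕ) (hb : 4 ≤ b) (he : Even b) : Function.Injective (fLab b) := by
  obtain ⟨r, hr⟩ := he
  rintro (i | (⟨t, i⟩ | (i | i))) (j | (⟨s, j⟩ | (j | j))) h <;>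
    simp only [fLab] at h <;>
    first
      | (have hi := i.isLt
         have hj := j.isLt
         try have ht := t.isLt
         try have hs := s.isLt
         simp only [Sum.inl.injEq, Sum.inr.injEq, Prod.mk.injEq, Fin.ext_iff]
         (try split_ifs at h) <;> omega)
      | (exfalso
         have hi := i.isLt
         have hj := j.isLt
         try have ht := t.isLt
         try have hs := s.isLt
         (try split_ifs at h) <;> omega)

lemma bwOf_fLab (b : ℕ) (hb : 4 ≤ b) (he : Even b) : bwOf (R'graph b) (fLab b) = b := by
  obtain ⟨r, hr⟩ := he
  set y0 : Fin 4 ⊕ ((Fin 2 × Fin (b / 2)) ⊕ (Fin b ⊕ Fin (2 * b - 3))) :=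
    Sum.inr (Sum.inr (Sum.inl (⟨0, by omega⟩ : Fin b))) with hy0
  have hAdj : (R'graph b).Adj (Sum.inl 1) y0 := by
    rw [R'graph, SimpleGraph.fromRel_adj]
    exact ⟨by simp, Or.inl rfl⟩
  have hval : (b : ℕ) = (fLab b (Sum.inl 1) - fLab b y0).natAbs := by
    simp only [fLab, hy0]
    norm_num
    omega
  apply le_antisymm
  · refine csSup_le ⟨b, Sum.inl 1, y0, hAdj, hval⟩ ?_
    rintro n ⟨u, v, hadj, rfl⟩
    rw [R'graph, SimpleGraph.fromRel_adj] at hadj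
    obtain ⟨hne, h | h⟩ := hadj <;>
      rcases u with i | (⟨t, i⟩ | (i | i)) <;> rcases v with j | (⟨s, j⟩ | (j | j)) <;>
      simp only [R'Rel] at h <;>
      (try have hi := i.isLt) <;> (try have hj := j.isLt) <;>
      (try have ht := t.isLt) <;> (try have hs := s.isLt) <;>
      simp only [fLab] <;> split_ifs <;> omega
  · exact le_csSup (bwOf_bddAbove _ _)
      ⟨Sum.inl 1, y0, hAdj, hval⟩

/-- Vertex set of the radius-one star around `w`. -/
def starSet (b : ℕ) : Set (Fin 4 ⊕ ((Fin 2 × Fin (b / 2)) ⊕ (Fin b ⊕ Fin (2 * b - 3)))) :=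
  Set.range Sum.inl ∪
    Set.range (fun i : Fin (2 * b - 3) => Sum.inr (Sum.inr (Sum.inr i)))

/-- The star around `w` as a subgraph of `R'graph b`. -/
def starSub (b : ℕ) : (R'graph b).Subgraph where
  verts := starSet b
  Adj u v := (u = Sum.inl 3 ∨ v = Sum.inl 3) ∧ u ≠ v ∧ u ∈ starSet b ∧ v ∈ starSet b
  adj_sub := by
    rintro u v ⟨h3 | h3, hne, hu, hv⟩ <;> subst h3 <;>
      rw [R'graph, SimpleGraph.fromRel_adj]
    · refine ⟨hne, Or.inl ?_⟩
      rcases hv with ⟨j, rfl⟩ | ⟨j, rfl⟩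
      · exact ⟨rfl, fun hj => hne (by rw [hj])⟩
      · exact rfl
    · refine ⟨hne, Or.inr ?_⟩
      rcases hu with ⟨j, rfl⟩ | ⟨j, rfl⟩
      · exact ⟨rfl, fun hj => hne (by rw [hj])⟩
      · exact rfl
  edge_vert := by rintro u v ⟨_, _, hu, _⟩; exact hu
  symm := by constructor; rintro u v ⟨h3, hne, hu, hv⟩; exact ⟨h3.symm, hne.symm, hv, hu⟩

lemma starSub_conn (b : ℕ) : (starSub b).coe.Connected := by
  have hw : Sum.inl 3 ∈ starSet b := Set.mem_union_left _ ⟨3, rfl⟩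
  rw [SimpleGraph.connected_iff]
  refine ⟨?_, ⟨⟨Sum.inl 3, hw⟩⟩⟩
  have key : ∀ a : (starSub b).verts, (starSub b).coe.Reachable a ⟨Sum.inl 3, hw⟩ := by
    rintro ⟨a, ha⟩
    by_cases hh : a = Sum.inl 3
    · subst hh
      exact SimpleGraph.Reachable.refl _
    · apply SimpleGraph.Adj.reachable
      show (starSub b).Adj a (Sum.inl 3)
      exact ⟨Or.inr rfl, hh, ha, hw⟩
  intro a c
  exact (key a).trans (key c).symm

lemma starSet_ncard (b : ℕ) : (starSet b).ncard = 4 + (2 * b - 3) := by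
  have hinj2 : Function.Injective (fun i : Fin (2 * b - 3) =>
      (Sum.inr (Sum.inr (Sum.inr i)) :
        Fin 4 ⊕ ((Fin 2 × Fin (b / 2)) ⊕ (Fin b ⊕ Fin (2 * b - 3))))) := by
    intro a c h
    simpa using h
  have hdisj : Disjoint (Set.range (Sum.inl : Fin 4 → _))
      (Set.range (fun i : Fin (2 * b - 3) =>
        (Sum.inr (Sum.inr (Sum.inr i)) :
          Fin 4 ⊕ ((Fin 2 × Fin (b / 2)) ⊕ (Fin b ⊕ Fin (2 * b - 3)))))) := by
    rw [Set.disjoint_left]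
    rintro _ ⟨i, rfl⟩ ⟨j, hj⟩
    simp at hj
  rw [starSet, Set.ncard_union_eq hdisj (Set.toFinite _) (Set.toFinite _),
    ← Nat.card_coe_set_eq, ← Nat.card_coe_set_eq,
    Nat.card_range_of_injective Sum.inl_injective, Nat.card_range_of_injective hinj2,
    Nat.card_eq_fintype_card, Nat.card_eq_fintype_card, Fintype.card_fin, Fintype.card_fin]

lemma starSub_diam (b : ℕ) : (starSub b).coe.diam = 2 := by
  have hw : Sum.inl 3 ∈ starSet b := Set.mem_union_left _ ⟨3, rfl⟩
  set w0 : (starSub b).verts := ⟨Sum.inl 3, hw⟩ with hw0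
  have hadj_w : ∀ a : (starSub b).verts, a ≠ w0 → (starSub b).coe.Adj a w0 := by
    rintro ⟨a, ha⟩ hne
    show (starSub b).Adj a (Sum.inl 3)
    exact ⟨Or.inr rfl, fun he => hne (Subtype.ext he), ha, hw⟩
  have hedist : ∀ a : (starSub b).verts, (starSub b).coe.edist a w0 ≤ 1 := by
    intro a
    by_cases hh : a = w0
    · subst hh; simp
    · exact le_of_eq (SimpleGraph.edist_eq_one_iff_adj.mpr (hadj_w a hh))
  have hle : (starSub b).coe.ediam ≤ 2 := by
    apply SimpleGraph.ediam_le_of_edist_le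
    intro a c
    calc (starSub b).coe.edist a c
        ≤ (starSub b).coe.edist a w0 + (starSub b).coe.edist w0 c :=
          SimpleGraph.edist_triangle
      _ ≤ 1 + 1 := add_le_add (hedist a)
          (by rw [SimpleGraph.edist_comm]; exact hedist c)
      _ = 2 := by norm_num
  have hx : Sum.inl 0 ∈ starSet b := Set.mem_union_left _ ⟨0, rfl⟩
  have hyy : Sum.inl 1 ∈ starSet b := Set.mem_union_left _ ⟨1, rfl⟩
  have hne0 : (⟨Sum.inl 0, hx⟩ : (starSub b).verts) ≠ ⟨Sum.inl 1, hyy⟩ := by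
    intro hh
    have := congrArg Subtype.val hh
    simp at this
  have hnadj : ¬ (starSub b).coe.Adj ⟨Sum.inl 0, hx⟩ ⟨Sum.inl 1, hyy⟩ := by
    rintro ⟨h3 | h3, -, -, -⟩ <;> simp at h3
  have h2e : (2 : ℕ∞) ≤ (starSub b).coe.edist ⟨Sum.inl 0, hx⟩ ⟨Sum.inl 1, hyy⟩ :=
    two_le_enat (fun h0 => hne0 (SimpleGraph.edist_eq_zero_iff.mp h0))
      (fun h1 => hnadj (SimpleGraph.edist_eq_one_iff_adj.mp h1))
  have hed : (starSub b).coe.ediam = 2 :=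
    le_antisymm hle (le_trans h2e SimpleGraph.edist_le_ediam)
  unfold SimpleGraph.diam
  rw [hed]
  rfl

/-- For every even `b ≥ 4`, the tree `R_b'` has bandwidth exactly `b` and local density
`b`, so `B(R_b') = β(R_b') = b`. -/
theorem bandwidth_R'graph (b : ℕ) (hb : 4 ≤ b) (heven : Even b) :
    bandwidth (R'graph b) = b ∧ localDensity (R'graph b) = b := by
  have hn : (starSub b).verts.ncard = 4 + (2 * b - 3) := starSet_ncard b
  have hne2 : 2 ≤ (starSub b).verts.ncard := by omega
  have hdval : ((starSub b).verts.ncard - 1) ⌈/⌉ (starSub b).coe.diam = b := by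
    rw [hn, starSub_diam b, Nat.ceilDiv_eq_add_pred_div]
    omega
  have hconn := starSub_conn b
  have hkey : ∀ f : _ → ℤ, Function.Injective f → b ≤ bwOf (R'graph b) f := by
    intro f hf
    calc b = _ := hdval.symm
      _ ≤ bwOf (R'graph b) f := key_le _ hconn hne2 hf
  have hub : ∀ d ∈ {d | ∃ H : (R'graph b).Subgraph, H.coe.Connected ∧ 2 ≤ H.verts.ncard ∧
      d = (H.verts.ncard - 1) ⌈/⌉ H.coe.diam}, d ≤ b := by
    rintro d ⟨H, hc, h2, rfl⟩
    calc (H.verts.ncard - 1) ⌈/⌉ H.coe.diam ≤ bwOf (R'graph b) (fLab b) :=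
          key_le H hc h2 (fLab_inj b hb heven)
      _ = b := bwOf_fLab b hb heven
  constructor
  · apply le_antisymm
    · exact Nat.sInf_le ⟨fLab b, fLab_inj b hb heven, (bwOf_fLab b hb heven).symm⟩
    · refine le_csInf ⟨bwOf (R'graph b) (fLab b), fLab b, fLab_inj b hb heven, rfl⟩ ?_
      rintro n ⟨f, hf, rfl⟩
      exact hkey f hf
  · apply le_antisymm
    · exact csSup_le ⟨b, starSub b, hconn, hne2, hdval.symm⟩ hub
    · exact le_csSup ⟨b, hub⟩ ⟨starSub b, hconn, hne2, hdval.symm⟩
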